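/- arXiv:1910.00190 — 4 statements merged into one kernel-verified Lean document; each statement's English description precedes it below -/
import Mathlib

section
/- Let B(R,S) be a bistructure. The intersection graph of B — the simple graph whose vertices are the loops of B, with an edge between two distinct loops exactly when they have nonempty intersection — is connected; equivalently, the loop nerve K(B) is connected (H_0(K(B);ℤ) ≅ ℤ). -/
/-- An arc `(i,j)` in a diagram. -/
abbrev Arc : Type := ℕ × ℕ

/-- Two arcs cross iff `p.1 < q.1 < p.2 < q.2` or `q.1 < p.1 < q.2 < p.2`. -/
def Arc.crosses (p q : Arc) : Prop :=
  (p.1 < q.1 ∧ q.1 < p.2 ∧ p.2 < q.2) ∨ (q.1 < p.1 ∧ p.1 < q.2 ∧ q.2 < p.2)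

/-- Nesting order: `Arc.nested q p` means `q ≺ p`, i.e. `p.1 < q.1 < q.2 < p.2`. -/
def Arc.nested (q p : Arc) : Prop := p.1 < q.1 ∧ q.1 < q.2 ∧ q.2 < p.2

/-- An RNA secondary structure on `{1,…,n}` with rainbow arc `(0, n+1)`. -/
structure SecStr (n : ℕ) : Type where
  arcs : Finset Arc
  lt_of_mem : ∀ p ∈ arcs, p.1 < p.2
  le_of_mem : ∀ p ∈ arcs, p.2 ≤ n + 1
  rainbow_mem : (0, n + 1) ∈ arcs
  matching : ∀ p ∈ arcs, ∀ q ∈ arcs, ∀ v : ℕ, 1 ≤ v → v ≤ n →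
    (v = p.1 ∨ v = p.2) → (v = q.1 ∨ v = q.2) → p = q
  noncrossing : ∀ p ∈ arcs, ∀ q ∈ arcs, ¬ Arc.crosses p q

namespace SecStr

variable {n : ℕ}

/-- The loop of an arc `p` of `R`. -/
def loop (R : SecStr n) (p : Arc) : Set ℕ :=
  {v | p.1 ≤ v ∧ v ≤ p.2 ∧ ¬ ∃ q ∈ R.arcs, Arc.nested q p ∧ q.1 < v ∧ v < q.2}

/-- A loop of `R` is the loop of one of its arcs. -/
def IsLoop (R : SecStr n) (L : Set ℕ) : Prop := ∃ p ∈ R.arcs, L = R.loop p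

end SecStr
/-- A label for a loop of a bistructure: `true` tags `R`-loops, `false` tags `S`-loops,
together with the maximal arc of the loop. -/
abbrev LoopLabel : Type := Bool × Arc

/-- A bistructure `B(R,S)`: two secondary structures on the same vertex set. -/
structure Bistructure (n : ℕ) : Type where
  R : SecStr n
  S : SecStr n

namespace Bistructure

variable {n : ℕ}

/-- The loop set of a bistructure: the disjoint union of the `R`-loops and `S`-loops,
encoded as tagged arcs. -/
def labels (B : Bistructure n) : Finset LoopLabel :=
  B.R.arcs.image (fun p => (true, p)) ∪ B.S.arcs.image (fun p => (false, p))

/-- The vertex set of the loop with label `x`. -/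
def loopSet (B : Bistructure n) (x : LoopLabel) : Set ℕ :=
  if x.1 then B.R.loop x.2 else B.S.loop x.2

/-- Two loops intersect. -/
def intersects (B : Bistructure n) (a b : LoopLabel) : Prop :=
  (B.loopSet a ∩ B.loopSet b).Nonempty

end Bistructure

/-- The intersection graph of a bistructure: vertices are the loops of `B`, with an edge
between two distinct loops exactly when they have nonempty intersection. -/
def Bistructure.interGraph {n : ℕ} (B : Bistructure n) :
    SimpleGraph {x : LoopLabel // x ∈ B.labels} where
  Adj a b := a ≠ b ∧ (B.loopSet ↑a ∩ B.loopSet ↑b).Nonempty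
  symm := by
    constructor
    rintro a b ⟨hab, v, hv1, hv2⟩
    exact ⟨hab.symm, v, hv2, hv1⟩
  loopless := by
    constructor
    rintro a ⟨h, -⟩
    exact h rfl

/-!
Already the loops of `R` alone chain the vertices together: for every `v ≤ n` the innermost
`R`-arc `(i, j)` with `i ≤ v < v + 1 ≤ j` has both `v` and `v + 1` in its loop. Hence, by
induction on `v`, every loop containing `v` is reachable from the loop of the rainbow arc,
which contains `0`; and every loop contains the left end of its arc.
-/

namespace SecStr

variable {n : ℕ} (R : SecStr n)

lemma fst_mem_loop {p : Arc} (hp : p ∈ R.arcs) : p.1 ∈ R.loop p := by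
  refine ⟨le_rfl, (R.lt_of_mem p hp).le, ?_⟩
  rintro ⟨q, -, ⟨hpq, -⟩, hq, -⟩
  omega

lemma le_of_mem_loop {p : Arc} (hp : p ∈ R.arcs) {v : ℕ} (hv : v ∈ R.loop p) : v ≤ n + 1 :=
  hv.2.1.trans (R.le_of_mem p hp)

lemma exists_mem_loop_and_succ_mem_loop {v : ℕ} (hv : v ≤ n) :
    ∃ p ∈ R.arcs, v ∈ R.loop p ∧ v + 1 ∈ R.loop p := by
  set T := R.arcs.filter fun p => p.1 ≤ v ∧ v + 1 ≤ p.2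
  have hT : T.Nonempty := ⟨(0, n + 1), Finset.mem_filter.2 ⟨R.rainbow_mem, by omega, by omega⟩⟩
  obtain ⟨p, hpT, hmin⟩ := T.exists_min_image (fun p => p.2 - p.1) hT
  obtain ⟨hp, hp1, hp2⟩ := Finset.mem_filter.1 hpT
  have innermost : ¬ ∃ q ∈ R.arcs, Arc.nested q p ∧ q.1 ≤ v ∧ v + 1 ≤ q.2 := by
    rintro ⟨q, hq, ⟨h1, h2, h3⟩, hq1, hq2⟩
    have := hmin q (Finset.mem_filter.2 ⟨hq, hq1, hq2⟩)
    omega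
  refine ⟨p, hp, ⟨hp1, by omega, ?_⟩, ⟨by omega, hp2, ?_⟩⟩ <;>
    exact fun ⟨q, hq, hnest, h1, h2⟩ => innermost ⟨q, hq, hnest, by omega, by omega⟩

end SecStr

namespace Bistructure

variable {n : ℕ} (B : Bistructure n)

def rLoop {p : Arc} (hp : p ∈ B.R.arcs) : {x : LoopLabel // x ∈ B.labels} :=
  ⟨(true, p), Finset.mem_union_left _ (Finset.mem_image_of_mem _ hp)⟩

lemma interGraph_reachable_of_mem {a b : {x : LoopLabel // x ∈ B.labels}} {v : ℕ}
    (ha : v ∈ B.loopSet a) (hb : v ∈ B.loopSet b) : B.interGraph.Reachable a b := by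
  by_cases hab : a = b
  · exact hab ▸ .rfl
  · exact SimpleGraph.Adj.reachable ⟨hab, v, ha, hb⟩

lemma exists_mem_loopSet (a : {x : LoopLabel // x ∈ B.labels}) :
    ∃ v ≤ n + 1, v ∈ B.loopSet a := by
  obtain ⟨x, hx⟩ := a
  simp only [labels, Finset.mem_union, Finset.mem_image] at hx
  rcases hx with ⟨p, hp, rfl⟩ | ⟨p, hp, rfl⟩
  · exact ⟨p.1, B.R.le_of_mem_loop hp (B.R.fst_mem_loop hp), B.R.fst_mem_loop hp⟩
  · exact ⟨p.1, B.S.le_of_mem_loop hp (B.S.fst_mem_loop hp), B.S.fst_mem_loop hp⟩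

lemma interGraph_reachable_rainbow {v : ℕ} (hv : v ≤ n + 1)
    {a : {x : LoopLabel // x ∈ B.labels}} (ha : v ∈ B.loopSet a) :
    B.interGraph.Reachable (B.rLoop B.R.rainbow_mem) a := by
  induction v generalizing a with
  | zero => exact B.interGraph_reachable_of_mem (B.R.fst_mem_loop B.R.rainbow_mem) ha
  | succ v ih =>
    obtain ⟨p, hp, hv, hv'⟩ := B.R.exists_mem_loop_and_succ_mem_loop (v := v) (by omega)
    exact (ih (by omega) (a := B.rLoop hp) hv).trans (B.interGraph_reachable_of_mem hv' ha)

end Bistructure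

/-- the intersection graph of a bistructure is connected (equivalently, the
loop nerve is connected, i.e. `H₀(K(B);ℤ) ≅ ℤ`). -/
theorem stmt4 (n : ℕ) (B : Bistructure n) : B.interGraph.Connected := by
  refine SimpleGraph.connected_iff_exists_forall_reachable _ |>.2 ⟨B.rLoop B.R.rainbow_mem, ?_⟩
  intro a
  obtain ⟨v, hv, ha⟩ := B.exists_mem_loopSet a
  exact B.interGraph_reachable_rainbow hv ha
end

section
/- Let B(R,S) be a bistructure and let x be an overlap, i.e., a vertex that is an endpoint of a non-rainbow R-arc p1 and of a non-rainbow S-arc p2. Replace x on the backbone by two consecutive new vertices x1 < x2 (all other vertices keeping their relative order), reattaching the x-endpoint of p1 to one of x1, x2 and the x-endpoint of p2 to the other. Then the attachment can be chosen so that in the resulting diagram p1 and p2 do not cross, while every other pair of arcs crosses in the new diagram if and only if it crossed in B. -/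
/-- The backbone relabeling when a vertex `x` is split into the two consecutive
vertices `x` and `x+1`: vertices `v < x` keep their position, vertices `v > x`
are shifted by one. -/
def shiftMap (x : ℕ) : ℕ → ℕ := fun v => if v < x then v else v + 1

/-- Endpoint map for arcs after splitting `x`: the endpoint at `x` is reattached at
position `a`, all other endpoints are shifted. -/
def splitEnd (x a : ℕ) : ℕ → ℕ := fun v => if v = x then a else shiftMap x v

/-- Image of an arc under the split of `x`, reattaching the `x`-endpoint at `a`. -/
def splitArc (x a : ℕ) (p : Arc) : Arc := (splitEnd x a p.1, splitEnd x a p.2)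

/-- Splitting preserves crossing, as long as the two arcs don't both have `x` as an
endpoint reattached to different positions. -/
lemma cross_split_iff (x a b : ℕ) (ha : a = x ∨ a = x + 1) (hb : b = x ∨ b = x + 1)
    (p q : Arc) (h : (p.1 ≠ x ∧ p.2 ≠ x) ∨ (q.1 ≠ x ∧ q.2 ≠ x) ∨ a = b) :
    Arc.crosses (splitArc x a p) (splitArc x b q) ↔ Arc.crosses p q := by
  simp only [Arc.crosses, splitArc, splitEnd, shiftMap]
  split_ifs <;> omega

/-- splitting an overlap `x` (an endpoint of a non-rainbow `R`-arc `p1` and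
of a non-rainbow `S`-arc `p2`) into two consecutive new vertices `x1 < x2`, the
attachment of the two freed endpoints can be chosen so that `p1` and `p2` do not cross
in the resulting diagram, while every other pair of arcs crosses in the new diagram if
and only if it crossed in `B`. -/
theorem stmt6 (n : ℕ) (B : Bistructure n) (x : ℕ) (hx1 : 1 ≤ x) (hxn : x ≤ n)
    (p1 p2 : Arc) (hp1 : p1 ∈ B.R.arcs) (hp2 : p2 ∈ B.S.arcs)
    (hnr1 : p1 ≠ (0, n + 1)) (hnr2 : p2 ≠ (0, n + 1))
    (he1 : x = p1.1 ∨ x = p1.2) (he2 : x = p2.1 ∨ x = p2.2) :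
    ∃ a1 a2 : ℕ, ({a1, a2} : Set ℕ) = {x, x + 1} ∧ a1 ≠ a2 ∧
      ¬ Arc.crosses (splitArc x a1 p1) (splitArc x a2 p2) ∧
      (∀ p ∈ B.R.arcs, ∀ q ∈ B.S.arcs, ¬ (p = p1 ∧ q = p2) →
        (Arc.crosses (splitArc x a1 p) (splitArc x a2 q) ↔ Arc.crosses p q)) ∧
      (∀ p ∈ B.R.arcs, ∀ p' ∈ B.R.arcs,
        (Arc.crosses (splitArc x a1 p) (splitArc x a1 p') ↔ Arc.crosses p p')) ∧
      (∀ q ∈ B.S.arcs, ∀ q' ∈ B.S.arcs,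
        (Arc.crosses (splitArc x a2 q) (splitArc x a2 q') ↔ Arc.crosses q q')) := by
  have hlt1 := B.R.lt_of_mem p1 hp1
  have hlt2 := B.S.lt_of_mem p2 hp2
  have key : ∀ a1 a2 : ℕ, (a1 = x ∧ a2 = x + 1 ∨ a1 = x + 1 ∧ a2 = x) →
      ¬ Arc.crosses (splitArc x a1 p1) (splitArc x a2 p2) →
      ∃ a1 a2 : ℕ, ({a1, a2} : Set ℕ) = {x, x + 1} ∧ a1 ≠ a2 ∧
      ¬ Arc.crosses (splitArc x a1 p1) (splitArc x a2 p2) ∧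
      (∀ p ∈ B.R.arcs, ∀ q ∈ B.S.arcs, ¬ (p = p1 ∧ q = p2) →
        (Arc.crosses (splitArc x a1 p) (splitArc x a2 q) ↔ Arc.crosses p q)) ∧
      (∀ p ∈ B.R.arcs, ∀ p' ∈ B.R.arcs,
        (Arc.crosses (splitArc x a1 p) (splitArc x a1 p') ↔ Arc.crosses p p')) ∧
      (∀ q ∈ B.S.arcs, ∀ q' ∈ B.S.arcs,
        (Arc.crosses (splitArc x a2 q) (splitArc x a2 q') ↔ Arc.crosses q q')) := by
    intro a1 a2 hch hnc
    have ha1 : a1 = x ∨ a1 = x + 1 := by omega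
    have ha2 : a2 = x ∨ a2 = x + 1 := by omega
    refine ⟨a1, a2, ?_, by omega, hnc, ?_, ?_, ?_⟩
    · rcases hch with ⟨h1, h2⟩ | ⟨h1, h2⟩
      · rw [h1, h2]
      · rw [h1, h2, Set.pair_comm]
    · intro p hp q hq hne
      refine cross_split_iff x a1 a2 ha1 ha2 p q ?_
      by_contra hcon
      push_neg at hcon
      obtain ⟨h1, h2, _⟩ := hcon
      have hpx : x = p.1 ∨ x = p.2 := by omega
      have hqx : x = q.1 ∨ x = q.2 := by omega
      exact hne ⟨B.R.matching p hp p1 hp1 x hx1 hxn hpx he1,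
        B.S.matching q hq p2 hp2 x hx1 hxn hqx he2⟩
    · intro p _ p' _
      exact cross_split_iff x a1 a1 ha1 ha1 p p' (Or.inr (Or.inr rfl))
    · intro q _ q' _
      exact cross_split_iff x a2 a2 ha2 ha2 q q' (Or.inr (Or.inr rfl))
  obtain ⟨i, j⟩ := p1
  obtain ⟨r, s⟩ := p2
  simp only at hlt1 hlt2 he1 he2
  rcases he1 with he1 | he1 <;> rcases he2 with he2 | he2 <;> subst he1 <;> subst he2
  · rcases le_or_gt j s with h | h
    · exact key (x + 1) x (Or.inr ⟨rfl, rfl⟩)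
        (by simp [Arc.crosses, splitArc, splitEnd, shiftMap]; split_ifs <;> omega)
    · exact key x (x + 1) (Or.inl ⟨rfl, rfl⟩)
        (by simp [Arc.crosses, splitArc, splitEnd, shiftMap]; split_ifs <;> omega)
  · exact key (x + 1) x (Or.inr ⟨rfl, rfl⟩)
      (by simp [Arc.crosses, splitArc, splitEnd, shiftMap]; split_ifs <;> omega)
  · exact key x (x + 1) (Or.inl ⟨rfl, rfl⟩)
      (by simp [Arc.crosses, splitArc, splitEnd, shiftMap]; split_ifs <;> omega)
  · rcases le_or_gt i r with h | h
    · exact key (x + 1) x (Or.inr ⟨rfl, rfl⟩)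
        (by simp [Arc.crosses, splitArc, splitEnd, shiftMap]; split_ifs <;> omega)
    · exact key x (x + 1) (Or.inl ⟨rfl, rfl⟩)
        (by simp [Arc.crosses, splitArc, splitEnd, shiftMap]; split_ifs <;> omega)
end

section
/- Let X be an irreducible substructure of a bistructure B, let L ∈ X, and let X_1,…,X_k be the irreducible components of X∖{L} (the connected components of the intersection graph on the loops of X∖{L}). Then: (i) V^{X_i} ∩ V^{X_j} = ∅ for all i ≠ j; (ii) E^{X_i} ⊆ L ∪ E^X for every i; and (iii) V^X = L ∪ ⋃_{i=1}^k V^{X_i}. -/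
open scoped Classical

namespace Bistructure

variable {n : ℕ}

/-- The vertex set `V^X` of a substructure `X` (a set of loops of `B`). -/
def Vset (B : Bistructure n) (X : Finset LoopLabel) : Set ℕ :=
  ⋃ L ∈ X, B.loopSet L

/-- The exposed vertex set `E^X = V^X ∩ V^{B∖X}` of a substructure `X`. -/
def exposed (B : Bistructure n) (X : Finset LoopLabel) : Set ℕ :=
  B.Vset X ∩ B.Vset (B.labels \ X)

/-- A substructure is reducible if it can be partitioned into two nonempty parts such
that every loop of one part is disjoint from every loop of the other. -/
def Reducible (B : Bistructure n) (X : Finset LoopLabel) : Prop :=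
  ∃ X1 X2 : Finset LoopLabel, X1 ∪ X2 = X ∧ Disjoint X1 X2 ∧
    X1.Nonempty ∧ X2.Nonempty ∧ ∀ a ∈ X1, ∀ b ∈ X2, ¬ B.intersects a b

/-- The connected component of `L` in the loop intersection graph of `X`. -/
noncomputable def comp (B : Bistructure n) (X : Finset LoopLabel) (L : LoopLabel) :
    Finset LoopLabel :=
  X.filter (fun P =>
    Relation.ReflTransGen (fun a b => a ∈ X ∧ b ∈ X ∧ B.intersects a b) L P)

/-- The irreducible components of a substructure `X`: the connected components of its
loop intersection graph. -/
noncomputable def comps (B : Bistructure n) (X : Finset LoopLabel) :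
    Finset (Finset LoopLabel) :=
  X.image (B.comp X)

end Bistructure

/-!
The components of `X ∖ {L}` are the classes of the equivalence relation generated by
intersection of loops, so a loop meeting a component either belongs to it or is not a loop of
`X ∖ {L}`; all three claims follow from this closure property.
-/

namespace Bistructure

variable {n : ℕ} (B : Bistructure n)

def adj (X : Finset LoopLabel) (a b : LoopLabel) : Prop :=
  a ∈ X ∧ b ∈ X ∧ B.intersects a b

variable {B}

theorem mem_Vset {C : Finset LoopLabel} {v : ℕ} :
    v ∈ B.Vset C ↔ ∃ a ∈ C, v ∈ B.loopSet a := by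
  simp [Vset]

theorem Vset_insert (a : LoopLabel) (C : Finset LoopLabel) :
    B.Vset (insert a C) = B.loopSet a ∪ B.Vset C :=
  Finset.set_biUnion_insert a C B.loopSet

theorem Vset_singleton (a : LoopLabel) : B.Vset {a} = B.loopSet a :=
  Finset.set_biUnion_singleton a B.loopSet

theorem Vset_mono {C D : Finset LoopLabel} (h : C ⊆ D) : B.Vset C ⊆ B.Vset D :=
  Set.biUnion_subset_biUnion_left (by exact_mod_cast h)

theorem intersects_of_mem {a b : LoopLabel} {v : ℕ} (ha : v ∈ B.loopSet a)
    (hb : v ∈ B.loopSet b) : B.intersects a b :=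
  ⟨v, ha, hb⟩

instance adj_symm (X : Finset LoopLabel) : Std.Symm (B.adj X) where
  symm := by
    rintro a b ⟨ha, hb, v, hva, hvb⟩
    exact ⟨hb, ha, v, hvb, hva⟩

theorem mem_comp {X : Finset LoopLabel} {M P : LoopLabel} :
    P ∈ B.comp X M ↔ P ∈ X ∧ Relation.ReflTransGen (B.adj X) M P :=
  Finset.mem_filter

theorem comp_subset (X : Finset LoopLabel) (M : LoopLabel) : B.comp X M ⊆ X :=
  Finset.filter_subset _ _

theorem self_mem_comp {X : Finset LoopLabel} {a : LoopLabel} (ha : a ∈ X) :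
    a ∈ B.comp X a :=
  mem_comp.2 ⟨ha, .refl⟩

theorem comp_eq_of_mem {X : Finset LoopLabel} {M b : LoopLabel} (hb : b ∈ B.comp X M) :
    B.comp X b = B.comp X M := by
  have hMb := (mem_comp.1 hb).2
  ext P
  simp only [mem_comp, and_congr_right_iff]
  exact fun _ ↦ ⟨hMb.trans, fun hMP ↦ (Std.Symm.symm _ _ hMb).trans hMP⟩

theorem comps_subset {X C : Finset LoopLabel} (hC : C ∈ B.comps X) : C ⊆ X := by
  obtain ⟨M, -, rfl⟩ := Finset.mem_image.1 hC
  exact comp_subset X M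

theorem eq_of_mem_comps {X C D : Finset LoopLabel} (hC : C ∈ B.comps X) (hD : D ∈ B.comps X)
    {b : LoopLabel} (hbC : b ∈ C) (hbD : b ∈ D) : C = D := by
  obtain ⟨M, -, rfl⟩ := Finset.mem_image.1 hC
  obtain ⟨N, -, rfl⟩ := Finset.mem_image.1 hD
  rw [← comp_eq_of_mem hbC, comp_eq_of_mem hbD]

theorem mem_comps_of_intersects {X C : Finset LoopLabel} (hC : C ∈ B.comps X)
    {a b : LoopLabel} (ha : a ∈ C) (hb : b ∈ X) (hab : B.intersects a b) : b ∈ C := by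
  obtain ⟨M, -, rfl⟩ := Finset.mem_image.1 hC
  obtain ⟨haX, hMa⟩ := mem_comp.1 ha
  exact mem_comp.2 ⟨hb, hMa.tail ⟨haX, hb, hab⟩⟩

theorem Vset_inter_eq_empty_of_mem_comps {X C D : Finset LoopLabel} (hC : C ∈ B.comps X)
    (hD : D ∈ B.comps X) (hCD : C ≠ D) : B.Vset C ∩ B.Vset D = ∅ := by
  refine Set.eq_empty_of_forall_notMem fun v ⟨hvC, hvD⟩ ↦ hCD ?_
  obtain ⟨a, ha, hva⟩ := mem_Vset.1 hvC
  obtain ⟨b, hb, hvb⟩ := mem_Vset.1 hvD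
  exact eq_of_mem_comps hC hD
    (mem_comps_of_intersects hC ha (comps_subset hD hb) (intersects_of_mem hva hvb)) hb

theorem Vset_eq_biUnion_comps (X : Finset LoopLabel) :
    B.Vset X = ⋃ C ∈ (B.comps X : Set (Finset LoopLabel)), B.Vset C := by
  refine subset_antisymm (fun v hv ↦ ?_)
    (Set.iUnion₂_subset fun C hC ↦ Vset_mono (comps_subset hC))
  obtain ⟨a, ha, hva⟩ := mem_Vset.1 hv
  exact Set.mem_iUnion₂.2
    ⟨B.comp X a, Finset.mem_image_of_mem _ ha, mem_Vset.2 ⟨a, self_mem_comp ha, hva⟩⟩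

theorem exposed_subset_of_mem_comps {X Y C : Finset LoopLabel} (hYX : Y ⊆ X)
    (hC : C ∈ B.comps Y) : B.exposed C ⊆ B.Vset (X \ Y) ∪ B.exposed X := by
  rintro v ⟨hvC, hvC'⟩
  obtain ⟨a, ha, hva⟩ := mem_Vset.1 hvC
  obtain ⟨b, hb, hvb⟩ := mem_Vset.1 hvC'
  obtain ⟨hbB, hbC⟩ := Finset.mem_sdiff.1 hb
  by_cases hbX : b ∈ X
  · have hbY : b ∉ Y := fun hbY ↦
      hbC (mem_comps_of_intersects hC ha hbY (intersects_of_mem hva hvb))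
    exact Or.inl (mem_Vset.2 ⟨b, Finset.mem_sdiff.2 ⟨hbX, hbY⟩, hvb⟩)
  · exact Or.inr ⟨mem_Vset.2 ⟨a, hYX (comps_subset hC ha), hva⟩,
      mem_Vset.2 ⟨b, Finset.mem_sdiff.2 ⟨hbB, hbX⟩, hvb⟩⟩

end Bistructure

theorem stmt14_general (n : ℕ) (B : Bistructure n) (X : Finset LoopLabel)
    (L : LoopLabel) (hL : L ∈ X) :
    (∀ C1 ∈ B.comps (X.erase L), ∀ C2 ∈ B.comps (X.erase L), C1 ≠ C2 →
        B.Vset C1 ∩ B.Vset C2 = ∅) ∧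
    (∀ C ∈ B.comps (X.erase L), B.exposed C ⊆ B.loopSet L ∪ B.exposed X) ∧
    B.Vset X = B.loopSet L ∪ ⋃ C ∈ (B.comps (X.erase L) : Set (Finset LoopLabel)), B.Vset C := by
  refine ⟨fun C hC D hD ↦ Bistructure.Vset_inter_eq_empty_of_mem_comps hC hD,
    fun C hC ↦ ?_, ?_⟩
  · have h := Bistructure.exposed_subset_of_mem_comps (X.erase_subset L) hC
    rwa [Finset.sdiff_erase_self hL, Bistructure.Vset_singleton] at h
  · rw [← Bistructure.Vset_eq_biUnion_comps, ← Bistructure.Vset_insert, Finset.insert_erase hL]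

/-- let `X` be an irreducible substructure of a bistructure `B`, `L ∈ X`,
and let the `Xᵢ` be the irreducible components of `X ∖ {L}`.  Then
(i) `V^{Xᵢ} ∩ V^{Xⱼ} = ∅` for `i ≠ j`; (ii) `E^{Xᵢ} ⊆ L ∪ E^X` for every `i`; and
(iii) `V^X = L ∪ ⋃ᵢ V^{Xᵢ}`. -/
theorem stmt14 (n : ℕ) (B : Bistructure n) (X : Finset LoopLabel) (hX : X ⊆ B.labels)
    (hirr : ¬ B.Reducible X) (L : LoopLabel) (hL : L ∈ X) :
    (∀ C1 ∈ B.comps (X.erase L), ∀ C2 ∈ B.comps (X.erase L), C1 ≠ C2 →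
        B.Vset C1 ∩ B.Vset C2 = ∅) ∧
    (∀ C ∈ B.comps (X.erase L), B.exposed C ⊆ B.loopSet L ∪ B.exposed X) ∧
    B.Vset X = B.loopSet L ∪ ⋃ C ∈ (B.comps (X.erase L) : Set (Finset LoopLabel)), B.Vset C :=
  stmt14_general n B X L hL
end

section
/- (Correctness of the Boltzmann sampler) Fix a finite alphabet A with |A| = 4, positive loop weights w(L,σ_L), and Q(X,τ) = Σ_{σ : V^X → A, σ|_{E^X} = τ} Π_{P∈X} w(P, σ|_P) as above. Consider the recursive sampler that, given an irreducible substructure X, boundary assignment τ : E^X → A, removed loop L, and irreducible components X_1,…,X_k of X∖{L}, samples the assignment σ' on (L ∪ ⋃_i E^{X_i}) ∖ E^X with probability w(L,σ_L) · Π_{i=1}^k Q(X_i,τ_{X_i}) / Q(X,τ) and then recurses independently on each X_i with boundary τ_{X_i}. Started on the irreducible components of the full bistructure B with empty boundary, the probability that the sampler outputs a given full assignment σ : V^B → A equals Π_{L∈B} w(L,σ|_L) / Q(B,∅); in particular, with w(L,σ_L) = e^{−η(σ_L,L)/KT} the sampler produces σ with Boltzmann probability e^{−η(σ,B)/KT}/Q(B).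 -/
open scoped Classical

/-- The substructures arising in the loop-removal decomposition determined by the choice
function `σ`: the irreducible components of `B` itself, and recursively the irreducible
components of `X ∖ {σ X}` for every arising substructure `X`. -/
inductive Bistructure.Reach {n : ℕ} (B : Bistructure n)
    (σ : Finset LoopLabel → LoopLabel) : Finset LoopLabel → Prop where
  | top (C : Finset LoopLabel) (hC : C ∈ B.comps B.labels) : Bistructure.Reach B σ C
  | step (X C : Finset LoopLabel) (hX : Bistructure.Reach B σ X)
      (hC : C ∈ B.comps (X.erase (σ X))) : Bistructure.Reach B σ C

namespace Bistructure

variable {n : ℕ}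

/-- The cost `|L ∪ ⋃ᵢ E^{Xᵢ}|` of the removal step at the substructure `X`, where
`L = σ X` is the removed loop and the `Xᵢ` are the irreducible components of
`X ∖ {L}`. -/
noncomputable def stepcost (B : Bistructure n) (σ : Finset LoopLabel → LoopLabel)
    (X : Finset LoopLabel) : ℕ :=
  (B.loopSet (σ X) ∪ ⋃ C ∈ B.comps (X.erase (σ X)), B.exposed C).ncard

/-- The cost `κ_D(B)` of the decomposition determined by the choice function `σ`:
the maximum of the step costs over all arising substructures. -/
noncomputable def cost (B : Bistructure n) (σ : Finset LoopLabel → LoopLabel) : ℕ :=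
  sSup {m | ∃ X, B.Reach σ X ∧ m = B.stepcost σ X}

end Bistructure

namespace Bistructure

variable {n : ℕ} {A : Type} [Fintype A]

/-- The dual partition function `Q(X,τ)` of a substructure `X` with boundary assignment
`τ` on the exposed vertices: the sum over all assignments `σ` of letters of `A` to the
vertices of `X` agreeing with `τ` on `E^X` (extended by the default letter `d` off
`V^X`) of the product of the loop weights. -/
noncomputable def Qpf (B : Bistructure n) (w : LoopLabel → (Fin (n + 2) → A) → ℝ)
    (d : A) (X : Finset LoopLabel) (τ : Fin (n + 2) → A) : ℝ :=
  ∑ σ ∈ Finset.univ.filter (fun σ : Fin (n + 2) → A =>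
      (∀ v : Fin (n + 2), (v : ℕ) ∈ B.exposed X → σ v = τ v) ∧
      (∀ v : Fin (n + 2), (v : ℕ) ∉ B.Vset X → σ v = d)),
    ∏ P ∈ X, w P σ

/-- The set `W = (L ∪ ⋃ᵢ E^{Xᵢ}) ∖ E^X` of vertices newly assigned at the removal of
the loop `L` from the substructure `X`. -/
noncomputable def Wset (B : Bistructure n) (X : Finset LoopLabel) (L : LoopLabel) :
    Set ℕ :=
  (B.loopSet L ∪ ⋃ C ∈ B.comps (X.erase L), B.exposed C) \ B.exposed X

/-- The combined assignment: `σ'` on `W` and `τ` elsewhere. -/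
noncomputable def combine (W : Set ℕ) (σ' τ : Fin (n + 2) → A) : Fin (n + 2) → A :=
  fun v => if (v : ℕ) ∈ W then σ' v else τ v

end Bistructure

/-! The sampler's recursion telescopes. By induction on `|X|`, `P X τ σ = ∏_{L∈X} w(L,σ) / Q(X,τ)`
whenever `σ` extends `τ`: the factors `Q(Xᵢ,σ)` produced at the removal of `L` cancel against the
denominators of the recursive calls, and the weights of `X ∖ {L}` split over its components `Xᵢ`.
At the top level the components of `B` have no exposed vertices and pairwise disjoint vertex
sets, and since each weight only reads its own loop, `Q(B,τ)` factors as `∏_C Q(C,τ)`. -/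

section Factorization

variable {V A R : Type*} [Fintype V] [DecidableEq V] [Fintype A] [CommSemiring R]

theorem sum_mul_sum_of_disjoint {S T : Set V} (hST : Disjoint S T) (d : A)
    {f g : (V → A) → R} (hf : ∀ σ σ', (∀ v ∈ S, σ v = σ' v) → f σ = f σ')
    (hg : ∀ σ σ', (∀ v ∈ T, σ v = σ' v) → g σ = g σ') :
    (∑ σ ∈ Finset.univ.filter (fun σ : V → A => ∀ v, v ∉ S → σ v = d), f σ) *
        ∑ σ ∈ Finset.univ.filter (fun σ : V → A => ∀ v, v ∉ T → σ v = d), g σ =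
      ∑ σ ∈ Finset.univ.filter (fun σ : V → A => ∀ v, v ∉ S ∪ T → σ v = d), f σ * g σ := by
  rw [Finset.sum_mul_sum, ← Finset.sum_product']
  refine Finset.sum_nbij' (fun p v => if v ∈ S then p.1 v else p.2 v)
    (fun σ => (fun v => if v ∈ S then σ v else d, fun v => if v ∈ T then σ v else d))
    ?_ ?_ ?_ ?_ ?_
  · simp only [Finset.mem_product, Finset.mem_filter, Finset.mem_univ, true_and, Set.mem_union,
      not_or, and_imp, Prod.forall]
    intro σ₁ σ₂ h₁ h₂ v hvS hvT
    simp [hvS, h₂ v hvT]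
  · simp only [Finset.mem_product, Finset.mem_filter, Finset.mem_univ, true_and]
    exact fun σ _ => ⟨fun v hv => if_neg hv, fun v hv => if_neg hv⟩
  · simp only [Finset.mem_product, Finset.mem_filter, Finset.mem_univ, true_and, Prod.forall,
      Prod.mk.injEq, and_imp]
    intro σ₁ σ₂ h₁ h₂
    constructor <;> funext v
    · by_cases hvS : v ∈ S <;> simp [hvS, h₁]
    · by_cases hvT : v ∈ T
      · simp [hvT, Set.disjoint_right.1 hST hvT]
      · simp [hvT, h₂]
  · simp only [Finset.mem_filter, Finset.mem_univ, true_and, Set.mem_union, not_or]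
    intro σ hσ
    funext v
    by_cases hvS : v ∈ S
    · simp [hvS]
    · by_cases hvT : v ∈ T
      · simp [hvS, hvT]
      · simp [hvS, hvT, hσ v ⟨hvS, hvT⟩]
  · simp only [Finset.mem_product, Finset.mem_filter, Finset.mem_univ, true_and, Prod.forall,
      and_imp]
    intro σ₁ σ₂ _ h₂
    congr 1
    · exact hf _ _ fun v hv => by simp [hv]
    · exact hg _ _ fun v hv => by simp [Set.disjoint_right.1 hST hv]

theorem prod_sum_eq_sum_prod_of_pairwiseDisjoint {ι : Type*} (s : Finset ι) {S : ι → Set V}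
    (hS : (s : Set ι).PairwiseDisjoint S) (d : A) {f : ι → (V → A) → R}
    (hf : ∀ i ∈ s, ∀ σ σ', (∀ v ∈ S i, σ v = σ' v) → f i σ = f i σ') :
    ∏ i ∈ s, ∑ σ ∈ Finset.univ.filter (fun σ : V → A => ∀ v, v ∉ S i → σ v = d), f i σ =
      ∑ σ ∈ Finset.univ.filter (fun σ : V → A => ∀ v, v ∉ ⋃ i ∈ s, S i → σ v = d),
        ∏ i ∈ s, f i σ := by
  induction s using Finset.induction_on with
  | empty =>
    have hconst : Finset.univ.filter (fun σ : V → A =>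
        ∀ v, v ∉ ⋃ i ∈ (∅ : Finset ι), S i → σ v = d) = {fun _ => d} := by
      ext σ
      simp [funext_iff]
    rw [Finset.prod_empty, hconst, Finset.sum_singleton, Finset.prod_empty]
  | @insert j s hj ih =>
    rw [Finset.set_biUnion_insert, Finset.prod_insert hj,
      ih (hS.subset (Finset.coe_subset.2 (Finset.subset_insert _ _)))
        fun i hi => hf i (Finset.mem_insert_of_mem hi)]
    refine (sum_mul_sum_of_disjoint ?_ d (hf j (Finset.mem_insert_self j s)) ?_).trans
      (Finset.sum_congr (by ext; simp) fun σ _ => (Finset.prod_insert (f := (f · σ)) hj).symm)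
    · exact Set.disjoint_iUnion₂_right.2 fun i hi => hS (Finset.mem_insert_self j s)
        (Finset.mem_insert_of_mem hi) (ne_of_mem_of_not_mem hi hj).symm
    · exact fun σ σ' h => Finset.prod_congr rfl fun i hi =>
        hf i (Finset.mem_insert_of_mem hi) σ σ' fun v hv => h v (Set.mem_biUnion hi hv)

end Factorization

namespace Bistructure

variable {n : ℕ} (B : Bistructure n)

section Components

variable {X C : Finset LoopLabel} {L P : LoopLabel}

theorem intersects_symm {a b : LoopLabel} (h : B.intersects a b) : B.intersects b a := by
  rwa [intersects, Set.inter_comm]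

theorem mem_comp_self (h : L ∈ X) : L ∈ B.comp X L :=
  Finset.mem_filter.2 ⟨h, Relation.ReflTransGen.refl⟩

theorem comp_subset_s16 : B.comp X L ⊆ X := Finset.filter_subset _ _

theorem comp_eq_of_mem_s16 (h : P ∈ B.comp X L) : B.comp X P = B.comp X L := by
  have : Std.Symm (fun a b => a ∈ X ∧ b ∈ X ∧ B.intersects a b) :=
    ⟨fun _ _ ⟨ha, hb, hab⟩ => ⟨hb, ha, B.intersects_symm hab⟩⟩
  obtain ⟨-, hLP⟩ := Finset.mem_filter.1 h
  ext Q
  simp only [comp, Finset.mem_filter, and_congr_right_iff]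
  exact fun _ => ⟨hLP.trans, (Std.Symm.symm _ _ hLP).trans⟩

theorem subset_of_mem_comps (hC : C ∈ B.comps X) : C ⊆ X := by
  obtain ⟨L, -, rfl⟩ := Finset.mem_image.1 hC
  exact B.comp_subset_s16

theorem biUnion_comps : (B.comps X).biUnion id = X := by
  ext L
  simp only [Finset.mem_biUnion, comps, Finset.mem_image, id]
  constructor
  · rintro ⟨-, ⟨M, -, rfl⟩, hL⟩
    exact B.comp_subset_s16 hL
  · exact fun hL => ⟨B.comp X L, ⟨L, hL, rfl⟩, B.mem_comp_self hL⟩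

theorem pairwiseDisjoint_comps : (B.comps X : Set (Finset LoopLabel)).PairwiseDisjoint id := by
  simp only [Set.PairwiseDisjoint, Set.Pairwise, comps, Finset.coe_image, Set.mem_image,
    Finset.mem_coe]
  rintro - ⟨L, -, rfl⟩ - ⟨L', -, rfl⟩ hne
  refine Finset.disjoint_left.2 fun P hP hP' => hne ?_
  rw [← B.comp_eq_of_mem_s16 hP, ← B.comp_eq_of_mem_s16 hP']

theorem prod_comps {M : Type*} [CommMonoid M] (f : LoopLabel → M) :
    ∏ C ∈ B.comps X, ∏ P ∈ C, f P = ∏ P ∈ X, f P := by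
  conv_rhs => rw [← B.biUnion_comps (X := X)]
  exact (Finset.prod_biUnion B.pairwiseDisjoint_comps).symm

theorem loopSet_subset_Vset (h : L ∈ X) : B.loopSet L ⊆ B.Vset X :=
  Set.subset_biUnion_of_mem (u := B.loopSet) h

theorem iUnion_Vset_comps : ⋃ C ∈ B.comps X, B.Vset C = B.Vset X := by
  conv_rhs => rw [Vset, ← B.biUnion_comps (X := X), Finset.set_biUnion_biUnion]
  rfl

theorem disjoint_Vset_loopSet_of_mem_comps (hC : C ∈ B.comps X) (hPX : P ∈ X) (hPC : P ∉ C) :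
    Disjoint (B.Vset C) (B.loopSet P) := by
  obtain ⟨L, -, rfl⟩ := Finset.mem_image.1 hC
  refine Set.disjoint_iUnion₂_left.2 fun Q hQ => Set.disjoint_left.2 fun v hvQ hvP => hPC ?_
  obtain ⟨hQX, hLQ⟩ := Finset.mem_filter.1 hQ
  exact Finset.mem_filter.2 ⟨hPX, hLQ.tail ⟨hQX, hPX, v, hvQ, hvP⟩⟩

theorem pairwiseDisjoint_Vset_comps :
    (B.comps X : Set (Finset LoopLabel)).PairwiseDisjoint B.Vset := by
  intro C hC C' hC' hne
  refine Set.disjoint_iUnion₂_right.2 fun P hP => B.disjoint_Vset_loopSet_of_mem_comps hC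
    (B.subset_of_mem_comps hC' hP) fun hPC => ?_
  exact Finset.disjoint_left.1 (B.pairwiseDisjoint_comps hC hC' hne) hPC hP

theorem exposed_labels : B.exposed B.labels = ∅ := by
  simp [exposed, Vset]

theorem exposed_eq_empty_of_mem_comps_labels (hC : C ∈ B.comps B.labels) : B.exposed C = ∅ := by
  refine Set.disjoint_iff_inter_eq_empty.1 (Set.disjoint_iUnion₂_right.2 fun P hP => ?_)
  obtain ⟨hP, hPC⟩ := Finset.mem_sdiff.1 hP
  exact B.disjoint_Vset_loopSet_of_mem_comps hC hP hPC

end Components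

variable {A : Type} [Fintype A] (w : LoopLabel → (Fin (n + 2) → A) → ℝ) (d : A)

theorem Qpf_pos (hwpos : ∀ L σ, 0 < w L σ) (X : Finset LoopLabel) (τ : Fin (n + 2) → A) :
    0 < B.Qpf w d X τ := by
  refine Finset.sum_pos (fun σ _ => Finset.prod_pos fun P _ => hwpos P σ)
    ⟨fun v => if (v : ℕ) ∈ B.Vset X then τ v else d, ?_⟩
  simp only [Finset.mem_filter, Finset.mem_univ, true_and]
  exact ⟨fun v hv => if_pos hv.1, fun v hv => if_neg hv⟩

theorem Qpf_of_exposed_eq_empty {C : Finset LoopLabel} (hC : B.exposed C = ∅)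
    (τ : Fin (n + 2) → A) :
    B.Qpf w d C τ = ∑ σ ∈ Finset.univ.filter (fun σ : Fin (n + 2) → A =>
      ∀ v, v ∉ Fin.val ⁻¹' B.Vset C → σ v = d), ∏ P ∈ C, w P σ := by
  refine Finset.sum_congr ?_ fun _ _ => rfl
  ext σ
  simp [hC]

theorem Qpf_labels_eq_prod_comps
    (hwloc : ∀ (L : LoopLabel) (σ σ' : Fin (n + 2) → A),
        (∀ v : Fin (n + 2), (v : ℕ) ∈ B.loopSet L → σ v = σ' v) → w L σ = w L σ')
    (τ : Fin (n + 2) → A) :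
    B.Qpf w d B.labels τ = ∏ C ∈ B.comps B.labels, B.Qpf w d C τ := by
  have hdisj : (B.comps B.labels : Set (Finset LoopLabel)).PairwiseDisjoint
      (fun C => (Fin.val : Fin (n + 2) → ℕ) ⁻¹' B.Vset C) :=
    fun C hC C' hC' hne => (B.pairwiseDisjoint_Vset_comps hC hC' hne).preimage Fin.val
  have hloc : ∀ C ∈ B.comps B.labels, ∀ σ σ' : Fin (n + 2) → A,
      (∀ v ∈ (Fin.val : Fin (n + 2) → ℕ) ⁻¹' B.Vset C, σ v = σ' v) →
        ∏ P ∈ C, w P σ = ∏ P ∈ C, w P σ' :=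
    fun C _ σ σ' h => Finset.prod_congr rfl fun P hP =>
      hwloc P σ σ' fun v hv => h v (B.loopSet_subset_Vset hP hv)
  calc B.Qpf w d B.labels τ
      = ∑ σ ∈ Finset.univ.filter (fun σ : Fin (n + 2) → A =>
          ∀ v, v ∉ ⋃ C ∈ B.comps B.labels, Fin.val ⁻¹' B.Vset C → σ v = d),
        ∏ C ∈ B.comps B.labels, ∏ P ∈ C, w P σ := by
        rw [B.Qpf_of_exposed_eq_empty w d B.exposed_labels τ]
        refine Finset.sum_congr ?_ fun σ _ => (B.prod_comps fun P => w P σ).symm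
        simp only [← Set.preimage_iUnion₂, B.iUnion_Vset_comps]
    _ = ∏ C ∈ B.comps B.labels, ∑ σ ∈ Finset.univ.filter (fun σ : Fin (n + 2) → A =>
          ∀ v, v ∉ Fin.val ⁻¹' B.Vset C → σ v = d), ∏ P ∈ C, w P σ := by
        -- the two sides differ only in the decidability instances of the filters
        convert (prod_sum_eq_sum_prod_of_pairwiseDisjoint _ hdisj d hloc).symm
    _ = ∏ C ∈ B.comps B.labels, B.Qpf w d C τ :=
        Finset.prod_congr rfl fun C hC =>
          (B.Qpf_of_exposed_eq_empty w d (B.exposed_eq_empty_of_mem_comps_labels hC) τ).symm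

theorem sampler_eq_div_Qpf (hwpos : ∀ L σ, 0 < w L σ) {σch : Finset LoopLabel → LoopLabel}
    (hσch : ∀ X, B.Reach σch X → σch X ∈ X)
    {P : Finset LoopLabel → (Fin (n + 2) → A) → (Fin (n + 2) → A) → ℝ}
    (hrec : ∀ X, B.Reach σch X → ∀ τ σ : Fin (n + 2) → A,
        (∀ v : Fin (n + 2), (v : ℕ) ∈ B.exposed X → σ v = τ v) →
        P X τ σ =
          (w (σch X) σ * ∏ C ∈ B.comps (X.erase (σch X)), B.Qpf w d C σ) / B.Qpf w d X τ *
            ∏ C ∈ B.comps (X.erase (σch X)), P C σ σ)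
    (σ : Fin (n + 2) → A) (X : Finset LoopLabel) (hX : B.Reach σch X) (τ : Fin (n + 2) → A)
    (hστ : ∀ v : Fin (n + 2), (v : ℕ) ∈ B.exposed X → σ v = τ v) :
    P X τ σ = (∏ L ∈ X, w L σ) / B.Qpf w d X τ := by
  induction X using Finset.strongInduction generalizing τ with
  | H X ih =>
    have hL := hσch X hX
    have hcomps : ∀ C ∈ B.comps (X.erase (σch X)),
        P C σ σ = (∏ L ∈ C, w L σ) / B.Qpf w d C σ := fun C hC =>
      ih C ((B.subset_of_mem_comps hC).trans_ssubset (Finset.erase_ssubset hL))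
        (Reach.step X C hX hC) σ fun _ _ => rfl
    have hQ : ∏ C ∈ B.comps (X.erase (σch X)), B.Qpf w d C σ ≠ 0 :=
      Finset.prod_ne_zero_iff.2 fun C _ => (B.Qpf_pos w d hwpos C σ).ne'
    rw [hrec X hX τ σ hστ, Finset.prod_congr rfl hcomps, Finset.prod_div_distrib,
      B.prod_comps fun L => w L σ, ← Finset.mul_prod_erase X (fun L => w L σ) hL]
    field_simp

end Bistructure

theorem stmt16_general (n : ℕ) (A : Type) [Fintype A] (d : A)
    (B : Bistructure n) (w : LoopLabel → (Fin (n + 2) → A) → ℝ)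
    (hwpos : ∀ L σ, 0 < w L σ)
    (hwloc : ∀ (L : LoopLabel) (σ σ' : Fin (n + 2) → A),
        (∀ v : Fin (n + 2), (v : ℕ) ∈ B.loopSet L → σ v = σ' v) → w L σ = w L σ')
    (σch : Finset LoopLabel → LoopLabel)
    (hσch : ∀ X, B.Reach σch X → σch X ∈ X)
    (P : Finset LoopLabel → (Fin (n + 2) → A) → (Fin (n + 2) → A) → ℝ)
    (hrec : ∀ X, B.Reach σch X → ∀ τ σ : Fin (n + 2) → A,
        (∀ v : Fin (n + 2), (v : ℕ) ∈ B.exposed X → σ v = τ v) →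
        P X τ σ =
          (w (σch X) σ * ∏ C ∈ B.comps (X.erase (σch X)), B.Qpf w d C σ) / B.Qpf w d X τ *
            ∏ C ∈ B.comps (X.erase (σch X)), P C σ σ) :
    ∀ σ : Fin (n + 2) → A, (∀ v : Fin (n + 2), (v : ℕ) ∉ B.Vset B.labels → σ v = d) →
      ∀ τ : Fin (n + 2) → A,
        ∏ C ∈ B.comps B.labels, P C τ σ =
          (∏ L ∈ B.labels, w L σ) / B.Qpf w d B.labels τ := by
  intro σ _ τ
  have hcomps : ∀ C ∈ B.comps B.labels, P C τ σ = (∏ L ∈ C, w L σ) / B.Qpf w d C τ :=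
    fun C hC => B.sampler_eq_div_Qpf w d hwpos hσch hrec σ C (.top C hC) τ fun v hv => by
      simp [B.exposed_eq_empty_of_mem_comps_labels hC] at hv
  rw [Finset.prod_congr rfl hcomps, Finset.prod_div_distrib, B.prod_comps fun L => w L σ,
    B.Qpf_labels_eq_prod_comps w d hwloc τ]

/-- correctness of the Boltzmann sampler: let `A` be an alphabet with
`|A| = 4`, `w` positive loop weights depending only on the letters on the loop, `σch` a
valid loop-removal choice, and let `P X τ σ` be the probability that the recursive
sampler started on the irreducible substructure `X` with boundary assignment `τ`
outputs the assignment `σ`; it satisfies the recursion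
`P X τ σ = (w(L,σ_L) · Πᵢ Q(Xᵢ,τ_{Xᵢ}) / Q(X,τ)) · Πᵢ P Xᵢ σ σ` where `L = σch X` and
the `Xᵢ` are the irreducible components of `X ∖ {L}`.  Then, started on the irreducible
components of the full bistructure `B` with empty boundary, the sampler outputs a given
full assignment `σ` with probability `Π_{L∈B} w(L,σ_L) / Q(B,∅)`, i.e. with the
Boltzmann probability when `w(L,σ_L) = exp(−η(σ_L,L)/KT)`. -/
theorem stmt16 (n : ℕ) (A : Type) [Fintype A] (hA : Fintype.card A = 4) (d : A)
    (B : Bistructure n) (w : LoopLabel → (Fin (n + 2) → A) → ℝ)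
    (hwpos : ∀ L σ, 0 < w L σ)
    (hwloc : ∀ (L : LoopLabel) (σ σ' : Fin (n + 2) → A),
        (∀ v : Fin (n + 2), (v : ℕ) ∈ B.loopSet L → σ v = σ' v) → w L σ = w L σ')
    (σch : Finset LoopLabel → LoopLabel)
    (hσch : ∀ X, B.Reach σch X → σch X ∈ X)
    (P : Finset LoopLabel → (Fin (n + 2) → A) → (Fin (n + 2) → A) → ℝ)
    (hrec : ∀ X, B.Reach σch X → ∀ τ σ : Fin (n + 2) → A,
        (∀ v : Fin (n + 2), (v : ℕ) ∈ B.exposed X → σ v = τ v) →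
        P X τ σ =
          (w (σch X) σ * ∏ C ∈ B.comps (X.erase (σch X)), B.Qpf w d C σ) / B.Qpf w d X τ *
            ∏ C ∈ B.comps (X.erase (σch X)), P C σ σ) :
    ∀ σ : Fin (n + 2) → A, (∀ v : Fin (n + 2), (v : ℕ) ∉ B.Vset B.labels → σ v = d) →
      ∀ τ : Fin (n + 2) → A,
        ∏ C ∈ B.comps B.labels, P C τ σ =
          (∏ L ∈ B.labels, w L σ) / B.Qpf w d B.labels τ :=
  stmt16_general n A d B w hwpos hwloc σch hσch P hrec
end
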